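/- arXiv:math/0411316 — 7 statements merged into one kernel-verified Lean document; each statement's English description precedes it below -/
import Mathlib

section
/- Let n ≥ 1, let f(z,w) = w^n + f₁(z)w^{n-1} + ⋯ + f_n(z) ∈ ℂ[z,w] be monic of degree n in w and squarefree, let V_f = {(z,w) ∈ ℂ × ℂ : f(z,w) = 0}, and let B = {z ∈ ℂ : f(z,·) has fewer than n distinct roots} (a finite set). Then the restriction of the first-coordinate projection pr₁ to V_f ∖ (B × ℂ), viewed as a map onto ℂ ∖ B, is a covering map, and every fiber has exactly n elements (an n-sheeted covering). -/
/-!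
Roots of a monic polynomial move continuously with its coefficients: if `p` is monic of degree
`n` and `‖p v‖ < δ ^ n`, then `p` has a root within `δ` of `v`, because `p v` is the product of
the distances from `v` to the roots. Over an unbranched point `y₀` separate the `n` roots of
`F y₀` by disjoint open sets `V r`, and let `O` be the open set of parameters `y` for which every
`V r` contains a root of `F y`. Since `F y` has at most `n` roots, each `V r` then contains
exactly one of them, and the parts of the root variety lying over `O` and in the various `V r`
are the sheets of a trivialization; root continuity also makes the projection an open map, so
each sheet is homeomorphic to `O`.
-/

open Function Polynomial NNReal Set Filter Topology Metric

namespace Polynomial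

variable {K : Type*} [NormedField K] [IsAlgClosed K]

theorem Monic.exists_isRoot_dist_lt {p : K[X]} (hp : p.Monic) {v : K} {δ : ℝ} (hδ : 0 ≤ δ)
    (h : ‖p.eval v‖ < δ ^ p.natDegree) : ∃ r, p.IsRoot r ∧ dist v r < δ := by
  lift δ to ℝ≥0 using hδ
  by_contra! hfar
  have hprod : ‖p.eval v‖₊ = (p.roots.map fun r => ‖v - r‖₊).prod := by
    rw [(IsAlgClosed.splits p).eval_eq_prod_roots_of_monic hp, ← nnnormHom_apply,
      ← MonoidHom.coe_coe, MonoidHom.map_multiset_prod, Multiset.map_map]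
    rfl
  have hle : δ ^ p.natDegree ≤ ‖p.eval v‖₊ := by
    rw [hprod, ← IsAlgClosed.card_roots_eq_natDegree, ← Multiset.card_map (fun r => ‖v - r‖₊)]
    refine Multiset.pow_card_le_prod fun x hx => ?_
    obtain ⟨r, hr, rfl⟩ := Multiset.mem_map.mp hx
    exact_mod_cast (dist_eq_norm v r) ▸ hfar r (isRoot_of_mem_roots hr)
  exact h.not_ge (by exact_mod_cast hle)

theorem ncard_setOf_eval_eq_zero_le {R : Type*} [CommRing R] [IsDomain R] {p : R[X]}
    (hp : p ≠ 0) : {w | p.eval w = 0}.ncard ≤ p.natDegree := by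
  classical
  have hset : {w | p.eval w = 0} = ↑p.roots.toFinset := by
    ext w
    simp [mem_roots hp]
  rw [hset, ncard_coe_finset]
  exact (Multiset.toFinset_card_le _).trans (card_roots' p)

end Polynomial

theorem Set.exists_equiv_inter_eq_singleton {α ι : Type*} [Finite ι] {S : Set α}
    (hS : S.Finite) (hcard : Nat.card S ≤ Nat.card ι) {U : ι → Set α}
    (hU : Pairwise (Disjoint on U)) (hmeet : ∀ i, (S ∩ U i).Nonempty) :
    ∃ e : ι ≃ S, ∀ i, S ∩ U i = {(e i : α)} := by
  choose s hs using hmeet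
  have : Finite S := hS
  have hinj : Injective fun i => (⟨s i, (hs i).1⟩ : S) := fun i j hij => by
    have hsij : s i = s j := congrArg Subtype.val hij
    exact hU.eq <| not_disjoint_iff.mpr ⟨s i, (hs i).2, hsij ▸ (hs j).2⟩
  let e : ι ≃ S := .ofBijective _ (hinj.bijective_of_nat_card_le hcard)
  refine ⟨e, fun i => Subset.antisymm (fun t ⟨ht, hti⟩ => ?_) (singleton_subset_iff.mpr (hs i))⟩
  have hj : s (e.symm ⟨t, ht⟩) = t := congrArg Subtype.val (e.apply_symm_apply ⟨t, ht⟩)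
  have hji : e.symm ⟨t, ht⟩ = i :=
    hU.eq <| not_disjoint_iff.mpr ⟨s _, (hs _).2, by rw [hj]; exact hti⟩
  rw [mem_singleton_iff, ← hji]
  exact hj.symm

section RootFamily

variable {Y : Type*} {F : Y → ℂ[X]} {n : ℕ}

variable (F n) in
/-- The paper's `ℂ ∖ B`, for a family of polynomials parametrized by an arbitrary `Y`. -/
abbrev unbranchedLocus : Set Y := {y | ¬ {w : ℂ | (F y).eval w = 0}.ncard < n}

variable (F n) in
/-- The paper's `V_f ∖ (B × ℂ)`. -/
abbrev UnbranchedRoots : Type _ :=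
  {p : Y × ℂ // (F p.1).eval p.2 = 0 ∧ ¬ {w : ℂ | (F p.1).eval w = 0}.ncard < n}

def UnbranchedRoots.proj (p : UnbranchedRoots F n) : unbranchedLocus F n := ⟨p.1.1, p.2.2⟩

theorem ncard_roots_eq_of_unbranched (hmonic : ∀ y, (F y).Monic)
    (hdeg : ∀ y, (F y).natDegree = n) (y : unbranchedLocus F n) :
    {w | (F y).eval w = 0}.ncard = n :=
  le_antisymm ((ncard_setOf_eval_eq_zero_le (hmonic y).ne_zero).trans_eq (hdeg y))
    (not_lt.mp y.2)

theorem exists_equiv_roots_inter_eq_singleton (hmonic : ∀ y, (F y).Monic)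
    (hdeg : ∀ y, (F y).natDegree = n) (y₀ : unbranchedLocus F n) {V : ℂ → Set ℂ}
    (hV : {w | (F y₀).eval w = 0}.PairwiseDisjoint V) {y : Y}
    (hy : ∀ r : {w | (F y₀).eval w = 0}, ({w | (F y).eval w = 0} ∩ V r).Nonempty) :
    ∃ e : {w | (F y₀).eval w = 0} ≃ {w | (F y).eval w = 0},
      ∀ r : {w | (F y₀).eval w = 0}, {w | (F y).eval w = 0} ∩ V r = {(e r : ℂ)} := by
  have : Finite {w | (F y₀).eval w = 0} := finite_setOfPred_isRoot (hmonic y₀).ne_zero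
  refine exists_equiv_inter_eq_singleton (finite_setOfPred_isRoot (hmonic y).ne_zero) ?_
    (fun r s hrs => hV r.2 s.2 (Subtype.coe_ne_coe.mpr hrs)) hy
  rw [Nat.card_coe_set_eq, Nat.card_coe_set_eq, ncard_roots_eq_of_unbranched hmonic hdeg y₀]
  exact (ncard_setOf_eval_eq_zero_le (hmonic y).ne_zero).trans_eq (hdeg y)

def UnbranchedRoots.fiberEquiv (y : unbranchedLocus F n) :
    (proj : UnbranchedRoots F n → _) ⁻¹' {y} ≃ {w | (F y).eval w = 0} where
  toFun p := ⟨p.1.1.2, (congrArg Subtype.val p.2 : p.1.1.1 = y) ▸ p.1.2.1⟩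
  invFun w := ⟨⟨(y, w), w.2, y.2⟩, rfl⟩
  left_inv p := Subtype.ext <| Subtype.ext <| Prod.ext (congrArg Subtype.val p.2).symm rfl
  right_inv _ := rfl

theorem UnbranchedRoots.card_proj_preimage_singleton (hmonic : ∀ y, (F y).Monic)
    (hdeg : ∀ y, (F y).natDegree = n) (y : unbranchedLocus F n) :
    Nat.card ((proj : UnbranchedRoots F n → _) ⁻¹' {y}) = n := by
  rw [Nat.card_congr (fiberEquiv y), Nat.card_coe_set_eq,
    ncard_roots_eq_of_unbranched hmonic hdeg y]

variable [TopologicalSpace Y]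

theorem eventually_roots_inter_nonempty (hmonic : ∀ y, (F y).Monic)
    (hdeg : ∀ y, (F y).natDegree = n) (hcont : ∀ w, Continuous fun y => (F y).eval w)
    {y₀ : Y} {v : ℂ} (hv : (F y₀).eval v = 0) {N : Set ℂ} (hN : N ∈ 𝓝 v) :
    ∀ᶠ y in 𝓝 y₀, ({w | (F y).eval w = 0} ∩ N).Nonempty := by
  obtain ⟨δ, hδ, hball⟩ := Metric.mem_nhds_iff.mp hN
  have hsmall : ∀ᶠ y in 𝓝 y₀, ‖(F y).eval v‖ < δ ^ n := by
    refine ((hcont v).tendsto y₀).norm.eventually_lt_const ?_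
    rw [hv, norm_zero]
    positivity
  filter_upwards [hsmall] with y hy
  obtain ⟨r, hr, hdist⟩ := (hmonic y).exists_isRoot_dist_lt hδ.le (hdeg y ▸ hy)
  exact ⟨r, hr, hball (mem_ball'.mpr hdist)⟩

theorem isOpen_setOf_forall_roots_inter_nonempty (hmonic : ∀ y, (F y).Monic)
    (hdeg : ∀ y, (F y).natDegree = n) (hcont : ∀ w, Continuous fun y => (F y).eval w)
    {ι : Type*} [Finite ι] {U : ι → Set ℂ} (hU : ∀ i, IsOpen (U i)) :
    IsOpen {y | ∀ i, ({w | (F y).eval w = 0} ∩ U i).Nonempty} := by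
  simp only [ofPred_forall]
  refine isOpen_iInter_of_finite fun i => isOpen_iff_mem_nhds.mpr ?_
  rintro y₀ ⟨r, hr, hrU⟩
  exact eventually_roots_inter_nonempty hmonic hdeg hcont hr ((hU i).mem_nhds hrU)

theorem UnbranchedRoots.continuous_proj : Continuous (proj : UnbranchedRoots F n → _) :=
  (continuous_fst.comp continuous_subtype_val).subtype_mk _

theorem UnbranchedRoots.isOpenMap_proj (hmonic : ∀ y, (F y).Monic)
    (hdeg : ∀ y, (F y).natDegree = n) (hcont : ∀ w, Continuous fun y => (F y).eval w) :
    IsOpenMap (proj : UnbranchedRoots F n → _) := by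
  refine IsOpenMap.of_nhds_le fun ⟨⟨y₀, v⟩, hv, _⟩ A hA => ?_
  obtain ⟨u, hu, huA⟩ := (mem_nhds_induced Subtype.val _ _).mp hA
  obtain ⟨M, hM, N, hN, hMN⟩ := mem_nhds_prod_iff.mp hu
  refine (mem_nhds_subtype _ _ _).mpr
    ⟨_, inter_mem hM (eventually_roots_inter_nonempty hmonic hdeg hcont hv hN), ?_⟩
  rintro y ⟨hyM, r, hr, hrN⟩
  exact huA (a := ⟨(y, r), hr, y.2⟩) (hMN ⟨hyM, hrN⟩)

theorem UnbranchedRoots.exists_trivialization (hn : 1 ≤ n) (hmonic : ∀ y, (F y).Monic)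
    (hdeg : ∀ y, (F y).natDegree = n) (hcont : ∀ w, Continuous fun y => (F y).eval w)
    (y₀ : unbranchedLocus F n) :
    ∃ t : Bundle.Trivialization {w | (F y₀).eval w = 0} (proj : UnbranchedRoots F n → _),
      y₀ ∈ t.baseSet := by
  set Z₀ := {w | (F y₀).eval w = 0}
  obtain ⟨r₀, hr₀⟩ : Z₀.Nonempty := nonempty_of_ncard_ne_zero <| by
    rw [ncard_roots_eq_of_unbranched hmonic hdeg y₀]
    exact Nat.one_le_iff_ne_zero.mp hn
  have : Nonempty Z₀ := ⟨⟨r₀, hr₀⟩⟩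
  have : Nonempty (unbranchedLocus F n → UnbranchedRoots F n) :=
    ⟨fun _ => ⟨(y₀, r₀), hr₀, y₀.2⟩⟩
  have hZ₀ : Z₀.Finite := finite_setOfPred_isRoot (hmonic y₀).ne_zero
  have : Finite Z₀ := hZ₀
  obtain ⟨V, hV, hVdisj⟩ := hZ₀.t2_separation
  set O := {y | ∀ r : Z₀, ({w | (F y).eval w = 0} ∩ V r).Nonempty}
  have hO : IsOpen O :=
    isOpen_setOf_forall_roots_inter_nonempty hmonic hdeg hcont fun r => (hV r).2
  have hsheets (y) (hy : y ∈ O) := exists_equiv_roots_inter_eq_singleton hmonic hdeg y₀ hVdisj hy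
  let U (r : Z₀) : Set (UnbranchedRoots F n) := Subtype.val ⁻¹' (O ×ˢ V r)
  have hsurj (r : Z₀) : SurjOn proj (U r) (Subtype.val ⁻¹' O) := fun y hy =>
    have ⟨w, hw, hwV⟩ := hy r
    ⟨⟨(y, w), hw, y.2⟩, ⟨hy, hwV⟩, rfl⟩
  refine ⟨IsOpen.trivializationDiscrete (f := proj) U (Subtype.val ⁻¹' O)
    (hO.preimage continuous_subtype_val) (fun r W hW => ⟨fun hWo => ?_, fun hWo => ?_⟩) ?_ hsurj
    ?_ ?_, fun r => ⟨r, r.2, (hV r).1⟩⟩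
  · exact (hWo.preimage continuous_proj).inter ((hO.prod (hV r).2).preimage continuous_subtype_val)
  · rw [← inter_eq_left.mpr (hW.trans (hsurj r)), ← image_preimage_inter]
    exact isOpenMap_proj hmonic hdeg hcont _ hWo
  · rintro r p ⟨hpO, hpV⟩ q ⟨-, hqV⟩ hpq
    obtain ⟨e, he⟩ := hsheets _ hpO
    have h1 : p.1.1 = q.1.1 := congrArg Subtype.val hpq
    have hq : q.1.2 ∈ {w | (F p.1.1).eval w = 0} ∩ V r := ⟨h1 ▸ q.2.1, hqV⟩
    rw [he r] at hq
    exact Subtype.ext (Prod.ext h1 (((he r).subset ⟨p.2.1, hpV⟩).trans hq.symm))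
  · exact fun r s hrs => (hVdisj r.2 s.2 (Subtype.coe_ne_coe.mpr hrs)).preimage _ |>.mono
      (preimage_mono (prod_subset_preimage_snd _ _)) (preimage_mono (prod_subset_preimage_snd _ _))
  · intro p hp
    obtain ⟨e, he⟩ := hsheets _ hp
    refine mem_iUnion.mpr ⟨e.symm ⟨p.1.2, p.2.1⟩, hp, ?_⟩
    simpa using ((he (e.symm ⟨p.1.2, p.2.1⟩)).symm.subset (mem_singleton _)).2

theorem UnbranchedRoots.isCoveringMap_proj (hn : 1 ≤ n) (hmonic : ∀ y, (F y).Monic)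
    (hdeg : ∀ y, (F y).natDegree = n) (hcont : ∀ w, Continuous fun y => (F y).eval w) :
    IsCoveringMap (proj : UnbranchedRoots F n → _) := fun y => by
  obtain ⟨t, ht⟩ := exists_trivialization hn hmonic hdeg hcont y
  have : Finite {w | (F y).eval w = 0} := finite_setOfPred_isRoot (hmonic y).ne_zero
  exact (IsEvenlyCovered.of_trivialization ht).to_isEvenlyCovered_preimage

end RootFamily

theorem statement1_general (n : ℕ) (hn : 1 ≤ n) (f : Polynomial (Polynomial ℂ))
    (hmonic : f.Monic) (hdeg : f.natDegree = n)
    (π : {p : ℂ × ℂ // Polynomial.eval p.2 (f.map (Polynomial.evalRingHom p.1)) = 0 ∧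
            ¬ ({w : ℂ | Polynomial.eval w (f.map (Polynomial.evalRingHom p.1)) = 0}).ncard < n} →
         {z : ℂ | ¬ ({w : ℂ | Polynomial.eval w (f.map (Polynomial.evalRingHom z)) = 0}).ncard < n})
    (hπ : ∀ p, (π p : ℂ) = (p : ℂ × ℂ).1) :
    IsCoveringMap π ∧ ∀ z, Nat.card (π ⁻¹' {z}) = n := by
  set F : ℂ → ℂ[X] := fun z => f.map (evalRingHom z)
  obtain rfl : π = UnbranchedRoots.proj (F := F) := funext fun p => Subtype.ext (hπ p)
  have hFmonic (z : ℂ) : (F z).Monic := hmonic.map _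
  have hFdeg (z : ℂ) : (F z).natDegree = n := by rw [hmonic.natDegree_map, hdeg]
  have hFcont (w : ℂ) : Continuous fun z => (F z).eval w := by
    simp only [F, map_evalRingHom_eval]
    exact (f.eval (C w)).continuous
  exact ⟨UnbranchedRoots.isCoveringMap_proj hn hFmonic hFdeg hFcont,
    UnbranchedRoots.card_proj_preimage_singleton hFmonic hFdeg⟩

/-- For `f(z,w) ∈ ℂ[z,w]` monic of degree `n ≥ 1` in `w` and squarefree,
with `V_f` its zero locus and `B = {z : f(z,·) has fewer than n distinct roots}`, the
first-coordinate projection restricted to `V_f ∖ (B × ℂ)`, viewed as a map onto `ℂ ∖ B`,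
is a covering map all of whose fibers have exactly `n` elements. -/
theorem statement1 (n : ℕ) (hn : 1 ≤ n) (f : Polynomial (Polynomial ℂ))
    (hmonic : f.Monic) (hdeg : f.natDegree = n) (hsq : Squarefree f)
    (π : {p : ℂ × ℂ // Polynomial.eval p.2 (f.map (Polynomial.evalRingHom p.1)) = 0 ∧
            ¬ ({w : ℂ | Polynomial.eval w (f.map (Polynomial.evalRingHom p.1)) = 0}).ncard < n} →
         {z : ℂ | ¬ ({w : ℂ | Polynomial.eval w (f.map (Polynomial.evalRingHom z)) = 0}).ncard < n})
    (hπ : ∀ p, (π p : ℂ) = (p : ℂ × ℂ).1) :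
    IsCoveringMap π ∧ ∀ z, Nat.card (π ⁻¹' {z}) = n :=
  statement1_general n hn f hmonic hdeg π hπ
end

section
/- Let n ≥ 1, let f(z,w) = w^n + f₁(z)w^{n-1} + ⋯ + f_n(z) ∈ ℂ[z,w] be monic of degree n in w and squarefree, and let B = {z ∈ ℂ : f(z,·) has fewer than n distinct roots}. For every z₀ ∈ ℂ ∖ B there exist ε > 0 and complex-analytic functions w₁, …, w_n defined on the open ball of radius ε about z₀ such that for every z in that ball the values w₁(z), …, w_n(z) are pairwise distinct and are exactly the set of roots of the polynomial w ↦ f(z,w). -/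
/-!
Over `z₀` the polynomial `f(z₀, ·)` of degree `n` has `n` distinct roots, so each of them is
simple: `∂f/∂w` does not vanish there. The holomorphic implicit function theorem continues each
root `r_i` to an analytic root `w_i(z)` near `z₀`. By continuity the `w_i(z)` stay pairwise
distinct on a small ball, and since `f(z, ·)` has at most `n` roots they are all of them.
-/
open Polynomial Filter Topology
open scoped ContDiff

theorem AnalyticAt.exists_implicitFunction {𝕜 E : Type*} [RCLike 𝕜] [NormedAddCommGroup E]
    [NormedSpace 𝕜 E] [CompleteSpace E] {F : E × 𝕜 → 𝕜} {u : E × 𝕜}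
    (hF : AnalyticAt 𝕜 F u) (hF₂ : deriv (fun w => F (u.1, w)) u.2 ≠ 0) :
    ∃ ψ : E → 𝕜, AnalyticAt 𝕜 ψ u.1 ∧ ψ u.1 = u.2 ∧ ∀ᶠ x in 𝓝 u.1, F (x, ψ x) = F u := by
  obtain ⟨x, y⟩ := u
  have cdf : ContDiffAt 𝕜 ω F (x, y) := hF.contDiffAt
  have if₂ : (fderiv 𝕜 F (x, y) ∘L .inr 𝕜 E 𝕜).IsInvertible := by
    have hslice := hF.differentiableAt.hasFDerivAt.comp y (hasFDerivAt_prodMk_right x y)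
    refine ⟨ContinuousLinearEquiv.unitsEquivAut 𝕜 (Units.mk0 _ hF₂), ?_⟩
    ext
    simpa [Function.comp_def] using hslice.hasDerivAt.deriv
  exact ⟨cdf.implicitFunction (by simp) if₂, (cdf.contDiffAt_implicitFunction _ if₂).analyticAt,
    cdf.implicitFunction_apply_self _ if₂, cdf.eventually_apply_implicitFunction _ if₂⟩

theorem eventually_injective_of_forall_continuousAt {ι X Y : Type*} [Finite ι]
    [TopologicalSpace X] [TopologicalSpace Y] [T2Space Y] {w : ι → X → Y} {x₀ : X}
    (hw : ∀ i, ContinuousAt (w i) x₀) (hinj : Function.Injective fun i => w i x₀) :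
    ∀ᶠ x in 𝓝 x₀, Function.Injective fun i => w i x := by
  have : ∀ i j, ∀ᶠ x in 𝓝 x₀, w i x = w j x → i = j := fun i j => by
    by_cases hij : i = j
    · exact .of_forall fun _ _ => hij
    · filter_upwards [((hw i).ne_iff_eventually_ne (hw j)).mp (hinj.ne hij)] with x hx h
      exact absurd h hx
  simpa only [Function.Injective, eventually_all] using this

namespace Polynomial
variable {R : Type*} [CommRing R] [IsDomain R] {p : R[X]}

theorem card_roots_toFinset_le_natDegree [DecidableEq R] (p : R[X]) :
    p.roots.toFinset.card ≤ p.natDegree :=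
  (Multiset.toFinset_card_le _).trans p.card_roots'

theorem nodup_roots_of_natDegree_le_card_toFinset [DecidableEq R]
    (h : p.natDegree ≤ p.roots.toFinset.card) : p.roots.Nodup :=
  Multiset.toFinset_card_eq_card_iff_nodup.mp <|
    (Multiset.toFinset_card_le _).antisymm (p.card_roots'.trans h)

theorem eval_derivative_ne_zero_of_nodup_roots (hnd : p.roots.Nodup) {x : R} (hx : x ∈ p.roots) :
    p.derivative.eval x ≠ 0 := by
  classical
  intro hder
  have hp : p ≠ 0 := ne_zero_of_mem_roots hx
  have hmult : 1 < p.rootMultiplicity x :=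
    (one_lt_rootMultiplicity_iff_isRoot hp).mpr ⟨isRoot_of_mem_roots hx, hder⟩
  rw [← count_roots, Multiset.count_eq_one_of_mem hnd hx] at hmult
  exact hmult.false

theorem isRoot_iff_exists_eq_of_injective {ι : Type*} [Fintype ι] (hp : p ≠ 0)
    (hdeg : p.natDegree ≤ Fintype.card ι) {v : ι → R} (hv : Function.Injective v)
    (hroot : ∀ i, p.IsRoot (v i)) (x : R) : p.IsRoot x ↔ ∃ i, v i = x := by
  classical
  have hsub : Finset.univ.image v ⊆ p.roots.toFinset := by
    simpa [Finset.image_subset_iff, mem_roots hp] using hroot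
  have heq : Finset.univ.image v = p.roots.toFinset := by
    refine Finset.eq_of_subset_of_card_le hsub ?_
    rw [Finset.card_image_of_injective _ hv, Finset.card_univ]
    exact p.card_roots_toFinset_le_natDegree.trans hdeg
  simpa [mem_roots hp] using (Finset.ext_iff.mp heq x).symm

theorem ncard_setOf_isRoot [DecidableEq R] (hp : p ≠ 0) :
    {x | p.IsRoot x}.ncard = p.roots.toFinset.card := by
  rw [← Set.ncard_coe_finset]
  congr 1
  ext x
  simp [mem_roots hp]

end Polynomial

theorem Polynomial.analyticAt_evalEval {𝕜 : Type*} [NontriviallyNormedField 𝕜] (f : 𝕜[X][X])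
    (u : 𝕜 × 𝕜) : AnalyticAt 𝕜 (fun p : 𝕜 × 𝕜 => f.evalEval p.1 p.2) u := by
  induction f using Polynomial.induction_on' with
  | add p q hp hq => simpa only [evalEval_add] using hp.fun_add hq
  | monomial k a =>
    simp only [← C_mul_X_pow_eq_monomial, evalEval_mul, evalEval_C, evalEval_pow, evalEval_X]
    exact (analyticAt_fst.aeval_polynomial a).mul (analyticAt_snd.pow k)

theorem Polynomial.exists_analyticAt_isRoot_map_evalRingHom {𝕜 : Type*} [RCLike 𝕜] (f : 𝕜[X][X])
    {z₀ w₀ : 𝕜}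
    (hroot : (f.map (evalRingHom z₀)).IsRoot w₀)
    (hsimple : (f.map (evalRingHom z₀)).derivative.eval w₀ ≠ 0) :
    ∃ ψ : 𝕜 → 𝕜, AnalyticAt 𝕜 ψ z₀ ∧ ψ z₀ = w₀ ∧
      ∀ᶠ z in 𝓝 z₀, (f.map (evalRingHom z)).IsRoot (ψ z) := by
  have hderiv : deriv (fun w => f.evalEval z₀ w) w₀ ≠ 0 := by
    simpa only [← map_evalRingHom_eval, Polynomial.deriv] using hsimple
  obtain ⟨ψ, hψ, hψ₀, hev⟩ := (f.analyticAt_evalEval (z₀, w₀)).exists_implicitFunction hderiv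
  refine ⟨ψ, hψ, hψ₀, hev.mono fun z hz => ?_⟩
  simpa only [IsRoot, map_evalRingHom_eval, hz] using hroot

theorem statement2_general (n : ℕ) (f : Polynomial (Polynomial ℂ))
    (hmonic : f.Monic) (hdeg : f.natDegree = n)
    (z₀ : ℂ)
    (hz₀ : ¬ ({w : ℂ | Polynomial.eval w (f.map (Polynomial.evalRingHom z₀)) = 0}).ncard < n) :
    ∃ ε > (0 : ℝ), ∃ w : Fin n → ℂ → ℂ,
      (∀ i, AnalyticOnNhd ℂ (w i) (Metric.ball z₀ ε)) ∧
      ∀ z ∈ Metric.ball z₀ ε,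
        (∀ i j : Fin n, i ≠ j → w i z ≠ w j z) ∧
        (∀ v : ℂ, Polynomial.eval v (f.map (Polynomial.evalRingHom z)) = 0 ↔ ∃ i, w i z = v) := by
  classical
  set P : ℂ → ℂ[X] := fun z => f.map (evalRingHom z)
  have hP₀ : ∀ z, P z ≠ 0 := fun z => (hmonic.map _).ne_zero
  have hPdeg : ∀ z, (P z).natDegree = n := fun z => (hmonic.natDegree_map _).trans hdeg
  have hcard : n ≤ (P z₀).roots.toFinset.card := by
    simpa [← ncard_setOf_isRoot (hP₀ z₀)] using hz₀
  have hnodup := nodup_roots_of_natDegree_le_card_toFinset (hPdeg z₀ ▸ hcard)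
  have hcard_eq : (P z₀).roots.toFinset.card = n :=
    ((P z₀).card_roots_toFinset_le_natDegree.trans (hPdeg z₀).le).antisymm hcard
  let r : Fin n ≃ (P z₀).roots.toFinset := (Finset.equivFinOfCardEq hcard_eq).symm
  have hr : ∀ i, (r i : ℂ) ∈ (P z₀).roots := fun i => Multiset.mem_toFinset.mp (r i).2
  choose ψ hψ hψ₀ hψroot using fun i =>
    f.exists_analyticAt_isRoot_map_evalRingHom (isRoot_of_mem_roots (hr i))
      (eval_derivative_ne_zero_of_nodup_roots hnodup (hr i))
  have hinj₀ : Function.Injective fun i => ψ i z₀ := by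
    simpa only [hψ₀, Function.comp_def] using Subtype.val_injective.comp r.injective
  have hnear : ∀ᶠ z in 𝓝 z₀, (∀ i, AnalyticAt ℂ (ψ i) z) ∧
      (Function.Injective fun i => ψ i z) ∧ ∀ i, (P z).IsRoot (ψ i z) :=
    (eventually_all.mpr fun i => (hψ i).eventually_analyticAt).and <|
      (eventually_injective_of_forall_continuousAt (fun i => (hψ i).continuousAt) hinj₀).and
        (eventually_all.mpr hψroot)
  obtain ⟨ε, hε, hball⟩ := Metric.eventually_nhds_iff_ball.mp hnear
  refine ⟨ε, hε, ψ, fun i z hz => (hball z hz).1 i, fun z hz => ?_⟩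
  obtain ⟨-, hinj, hroot⟩ := hball z hz
  exact ⟨fun i j => hinj.ne,
    isRoot_iff_exists_eq_of_injective (hP₀ z) (by simp [hPdeg]) hinj hroot⟩

/-- For `f(z,w) ∈ ℂ[z,w]` monic of degree `n ≥ 1` in `w` and squarefree,
and `B = {z : f(z,·) has fewer than n distinct roots}`, near every point `z₀ ∉ B` the `n`
roots of `f(z,·)` are given by `n` pairwise-distinct-valued analytic functions `w₁,…,wₙ`. -/
theorem statement2 (n : ℕ) (hn : 1 ≤ n) (f : Polynomial (Polynomial ℂ))
    (hmonic : f.Monic) (hdeg : f.natDegree = n) (hsq : Squarefree f)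
    (z₀ : ℂ)
    (hz₀ : ¬ ({w : ℂ | Polynomial.eval w (f.map (Polynomial.evalRingHom z₀)) = 0}).ncard < n) :
    ∃ ε > (0 : ℝ), ∃ w : Fin n → ℂ → ℂ,
      (∀ i, AnalyticOnNhd ℂ (w i) (Metric.ball z₀ ε)) ∧
      ∀ z ∈ Metric.ball z₀ ε,
        (∀ i j : Fin n, i ≠ j → w i z ≠ w j z) ∧
        (∀ v : ℂ, Polynomial.eval v (f.map (Polynomial.evalRingHom z)) = 0 ↔ ∃ i, w i z = v) :=
  statement2_general n f hmonic hdeg z₀ hz₀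
end

section
/- Let f(z,w) ∈ ℂ[z,w] be a polynomial in two complex variables and let (z₀, w₀) ∈ ℂ² satisfy: f(z₀, w₀) = 0, (∂f/∂w)(z₀, w₀) = 0, (∂²f/∂w²)(z₀, w₀) ≠ 0, and (∂f/∂z)(z₀, w₀) ≠ 0 (a simple vertical tangent of the curve f = 0). Then there exist δ > 0 and a complex-analytic function w(t) on the ball {|t| < δ} with w(0) = w₀ and w'(0) ≠ 0 such that f(z₀ + t², w(t)) = 0 for all |t| < δ. -/
/-!
Substitute `z = z₀ + t²`, `w = w₀ + t v`. Expanding `f` around `w₀`, the constant and linear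
coefficients vanish at `z₀`, hence are divisible by `z - z₀`, so
`f (z₀ + t², w₀ + t v) = t² G(t, v)` with `G` polynomial and `G(0, v) = a + b v²`, where `a = ∂f/∂z ≠ 0` and `b = ½ ∂²f/∂w² ≠ 0`.
For a root `v₀` of `a + b v²` we get `∂G/∂v (0, v₀) = 2 b v₀ ≠ 0`, so the analytic implicit
function theorem solves `G(t, v(t)) = 0` with `v(0) = v₀`, and `w(t) = w₀ + t v(t)` has
`w'(0) = v₀ ≠ 0`.
-/

open Topology
open scoped ContDiff

section ImplicitFunction

variable {𝕜 : Type*} [RCLike 𝕜]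
  {E₁ : Type*} [NormedAddCommGroup E₁] [NormedSpace 𝕜 E₁] [CompleteSpace E₁]
  {E₂ : Type*} [NormedAddCommGroup E₂] [NormedSpace 𝕜 E₂] [CompleteSpace E₂]
  {F : Type*} [NormedAddCommGroup F] [NormedSpace 𝕜 F] [CompleteSpace F]

theorem AnalyticAt.exists_implicitFunction_s7 {f : E₁ × E₂ → F} {u : E₁ × E₂}
    (hf : AnalyticAt 𝕜 f u) (hf₂ : (fderiv 𝕜 f u ∘L .inr 𝕜 E₁ E₂).IsInvertible) :
    ∃ ψ : E₁ → E₂, ψ u.1 = u.2 ∧ AnalyticAt 𝕜 ψ u.1 ∧ ∀ᶠ x in 𝓝 u.1, f (x, ψ x) = f u := by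
  have hω : ContDiffAt 𝕜 ω f u := hf.contDiffAt
  exact ⟨hω.implicitFunction (by simp) hf₂, hω.implicitFunction_apply_self _ hf₂,
    (hω.contDiffAt_implicitFunction _ hf₂).analyticAt, hω.eventually_apply_implicitFunction _ hf₂⟩

end ImplicitFunction

theorem ContinuousLinearMap.isInvertible_of_apply_one_ne_zero {𝕜 : Type*} [NormedField 𝕜]
    {L : 𝕜 →L[𝕜] 𝕜} (hL : L 1 ≠ 0) : L.IsInvertible :=
  ⟨ContinuousLinearEquiv.unitsEquivAut 𝕜 (Units.mk0 _ hL), by ext; simp⟩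

theorem isInvertible_fderiv_comp_inr_of_deriv_ne_zero {𝕜 : Type*} [NontriviallyNormedField 𝕜]
    {G : 𝕜 × 𝕜 → 𝕜} {u : 𝕜 × 𝕜} (hG : DifferentiableAt 𝕜 G u) (h : deriv (fun v => G (u.1, v)) u.2 ≠ 0) :
    (fderiv 𝕜 G u ∘L .inr 𝕜 𝕜 𝕜).IsInvertible := by
  refine ContinuousLinearMap.isInvertible_of_apply_one_ne_zero ?_
  have hslice : HasDerivAt (fun v => G (u.1, v)) (fderiv 𝕜 G u (0, 1)) u.2 :=
    hG.hasFDerivAt.comp_hasDerivAt u.2 ((hasDerivAt_const _ _).prodMk (hasDerivAt_id _))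
  simpa [hslice.deriv] using h

namespace Polynomial

theorem eq_X_sq_mul_divX_divX_add {R : Type*} [CommSemiring R] (p : R[X]) :
    p = X ^ 2 * p.divX.divX + C (p.coeff 1) * X + C (p.coeff 0) := by
  conv_lhs => rw [← X_mul_divX_add p, ← X_mul_divX_add p.divX]
  rw [coeff_divX]
  ring

theorem eval_divByMonic_X_sub_C_of_isRoot {R : Type*} [CommRing R] {p : R[X]} {a : R}
    (hp : p.IsRoot a) : (p /ₘ (X - C a)).eval a = p.derivative.eval a := by
  conv_rhs => rw [← mul_divByMonic_eq_iff_isRoot.mpr hp]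
  simp [derivative_mul]

theorem evalEval_add_eq_sq_mul_add_linear_part {R : Type*} [CommRing R] (f : R[X][X]) (x y u : R) :
    f.evalEval x (y + u) = u ^ 2 * (taylor (C y) f).divX.divX.evalEval x u
      + u * (f.derivative.eval (C y)).eval x + (f.eval (C y)).eval x := by
  have htaylor : f.evalEval x (y + u) = (taylor (C y) f).evalEval x u := by
    simp only [evalEval, taylor_eval, C_add, add_comm]
  rw [htaylor, congrArg (evalEval x u) (eq_X_sq_mul_divX_divX_add (taylor (C y) f)),
    taylor_coeff_one, taylor_coeff_zero]
  simp only [evalEval_add, evalEval_mul, evalEval_pow, evalEval_X, evalEval_C]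
  ring

variable {𝕜 : Type*} [NontriviallyNormedField 𝕜]

@[fun_prop]
theorem _root_.AnalyticAt.eval_polynomial {E : Type*} [NormedAddCommGroup E] [NormedSpace 𝕜 E]
    {f : E → 𝕜} {x : E} (p : 𝕜[X]) (hf : AnalyticAt 𝕜 f x) :
    AnalyticAt 𝕜 (fun x => p.eval (f x)) x :=
  hf.aeval_polynomial p

@[fun_prop]
theorem _root_.AnalyticAt.evalEval {E : Type*} [NormedAddCommGroup E] [NormedSpace 𝕜 E]
    {f g : E → 𝕜} {x : E} (p : 𝕜[X][X]) (hf : AnalyticAt 𝕜 f x) (hg : AnalyticAt 𝕜 g x) :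
    AnalyticAt 𝕜 (fun x => p.evalEval (f x) (g x)) x := by
  induction p using Polynomial.induction_on' with
  | add p q hp hq => simp only [evalEval_add]; exact hp.add hq
  | monomial n c =>
    simp only [← C_mul_X_pow_eq_monomial, evalEval_mul, evalEval_C, evalEval_pow, evalEval_X]
    fun_prop

theorem deriv_evalEval_snd (p : 𝕜[X][X]) (x y : 𝕜) :
    deriv (fun y => p.evalEval x y) y = p.derivative.evalEval x y := by
  simp only [← map_evalRingHom_eval, Polynomial.deriv, derivative_map]

theorem deriv_deriv_evalEval_snd (p : 𝕜[X][X]) (x y : 𝕜) :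
    deriv (deriv fun y => p.evalEval x y) y = 2 * (hasseDeriv 2 p).evalEval x y := by
  have h := congrFun (factorial_smul_hasseDeriv (R := 𝕜[X]) (k := 2)) p
  simp only [Nat.factorial_two, LinearMap.smul_apply, Function.iterate_succ', Function.iterate_zero,
    Function.comp_apply, id] at h
  rw [_root_.funext (deriv_evalEval_snd p x), deriv_evalEval_snd, ← h, evalEval_smul, nsmul_eq_mul,
    Nat.cast_ofNat]

theorem deriv_evalEval_fst (p : 𝕜[X][X]) (x y : 𝕜) :
    deriv (fun x => p.evalEval x y) x = (p.eval (C y)).derivative.eval x :=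
  Polynomial.deriv _

theorem exists_evalEval_add_sq_add_mul_eq_sq_mul (f : 𝕜[X][X]) (z₀ w₀ : 𝕜)
    (h0 : f.evalEval z₀ w₀ = 0) (hw : f.derivative.evalEval z₀ w₀ = 0) :
    ∃ G : 𝕜 × 𝕜 → 𝕜, (∀ x, AnalyticAt 𝕜 G x) ∧
      (∀ t v, f.evalEval (z₀ + t ^ 2) (w₀ + t * v) = t ^ 2 * G (t, v)) ∧
      ∀ v, G (0, v) =
        (f.eval (C w₀)).derivative.eval z₀ + (hasseDeriv 2 f).evalEval z₀ w₀ * v ^ 2 := by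
  set Q := (taylor (C w₀) f).divX.divX
  set k := f.eval (C w₀) /ₘ (X - C z₀)
  set m := f.derivative.eval (C w₀) /ₘ (X - C z₀)
  have hk := mul_divByMonic_eq_iff_isRoot.mpr (show (f.eval (C w₀)).IsRoot z₀ from h0)
  have hm := mul_divByMonic_eq_iff_isRoot.mpr (show (f.derivative.eval (C w₀)).IsRoot z₀ from hw)
  refine ⟨fun x => k.eval (z₀ + x.1 ^ 2) + x.1 * x.2 * m.eval (z₀ + x.1 ^ 2)
    + x.2 ^ 2 * Q.evalEval (z₀ + x.1 ^ 2) (x.1 * x.2), fun x => ?_, fun t v => ?_, fun v => ?_⟩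
  · have := analyticAt_fst (𝕜 := 𝕜) (p := x)
    have := analyticAt_snd (𝕜 := 𝕜) (p := x)
    fun_prop
  · rw [evalEval_add_eq_sq_mul_add_linear_part, ← hk, ← hm]
    simp only [eval_mul, eval_sub, eval_X, eval_C]
    ring
  · have hQ : Q.evalEval z₀ 0 = (hasseDeriv 2 f).evalEval z₀ w₀ := by
      simp only [Q, evalEval, C_0, ← coeff_zero_eq_eval_zero, coeff_divX, taylor_coeff]
    simp only [zero_pow two_ne_zero, zero_mul, add_zero, k, hQ,
      eval_divByMonic_X_sub_C_of_isRoot h0]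
    ring

end Polynomial

theorem exists_analyticAt_eventually_eq_zero_of_apply_zero_eq {G : ℂ × ℂ → ℂ}
    (hG : ∀ x, AnalyticAt ℂ G x) {a b : ℂ} (ha : a ≠ 0) (hb : b ≠ 0)
    (hG0 : ∀ v, G (0, v) = a + b * v ^ 2) :
    ∃ ψ : ℂ → ℂ, ψ 0 ≠ 0 ∧ AnalyticAt ℂ ψ 0 ∧ ∀ᶠ t in 𝓝 0, G (t, ψ t) = 0 := by
  obtain ⟨v₀, hv₀⟩ := IsAlgClosed.exists_pow_nat_eq (-a / b) two_pos
  have hv₀ne : v₀ ≠ 0 := by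
    rintro rfl
    exact ha (by simpa [hb] using hv₀.symm)
  have hGv₀ : G (0, v₀) = 0 := by
    rw [hG0, hv₀]
    field_simp
    ring
  have hslice : deriv (fun v => G (0, v)) v₀ ≠ 0 := by
    simp [hG0, hb, hv₀ne]
  obtain ⟨ψ, hψ0, hψ, hGψ⟩ := (hG (0, v₀)).exists_implicitFunction_s7
    (isInvertible_fderiv_comp_inr_of_deriv_ne_zero (hG _).differentiableAt hslice)
  exact ⟨ψ, hψ0 ▸ hv₀ne, hψ, hGψ.mono fun t ht => ht.trans hGv₀⟩

/-- local Puiseux parametrization at a simple vertical tangent.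
Let `f(z,w) ∈ ℂ[z,w]` (as an element of `(ℂ[z])[w]`, with associated polynomial function
`F z w`) and `(z₀, w₀)` satisfy `F z₀ w₀ = 0`, `∂F/∂w (z₀,w₀) = 0`, `∂²F/∂w² (z₀,w₀) ≠ 0`
and `∂F/∂z (z₀,w₀) ≠ 0`.  Then there are `δ > 0` and an analytic function `w(t)` on
`{|t| < δ}` with `w(0) = w₀`, `w'(0) ≠ 0` and `F (z₀ + t²) (w t) = 0` for `|t| < δ`. -/
theorem statement7 (f : Polynomial (Polynomial ℂ)) (z₀ w₀ : ℂ)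
    (F : ℂ → ℂ → ℂ)
    (hF : ∀ z w : ℂ, F z w = Polynomial.eval w (f.map (Polynomial.evalRingHom z)))
    (h0 : F z₀ w₀ = 0)
    (hw : deriv (fun w => F z₀ w) w₀ = 0)
    (hww : deriv (deriv (fun w => F z₀ w)) w₀ ≠ 0)
    (hz : deriv (fun z => F z w₀) z₀ ≠ 0) :
    ∃ δ > (0 : ℝ), ∃ w : ℂ → ℂ,
      AnalyticOnNhd ℂ w (Metric.ball 0 δ) ∧
      w 0 = w₀ ∧ deriv w 0 ≠ 0 ∧
      ∀ t ∈ Metric.ball (0 : ℂ) δ, F (z₀ + t ^ 2) (w t) = 0 := by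
  obtain rfl : F = fun z w => f.evalEval z w :=
    funext₂ fun z w => by rw [hF, Polynomial.map_evalRingHom_eval]
  beta_reduce at h0 ⊢
  rw [Polynomial.deriv_evalEval_snd] at hw
  rw [Polynomial.deriv_deriv_evalEval_snd] at hww
  rw [Polynomial.deriv_evalEval_fst] at hz
  obtain ⟨G, hG, hfG, hG0⟩ := Polynomial.exists_evalEval_add_sq_add_mul_eq_sq_mul f z₀ w₀ h0 hw
  obtain ⟨ψ, hψ0, hψ, hGψ⟩ :=
    exists_analyticAt_eventually_eq_zero_of_apply_zero_eq hG hz (right_ne_zero_of_mul hww) hG0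
  have hw : deriv (fun t => w₀ + t * ψ t) 0 = ψ 0 := by
    have h := ((hasDerivAt_id (0 : ℂ)).mul hψ.differentiableAt.hasDerivAt).const_add w₀
    simpa using h.deriv
  obtain ⟨δ, hδ, hball⟩ := Metric.eventually_nhds_iff_ball.mp (hψ.eventually_analyticAt.and hGψ)
  refine ⟨δ, hδ, fun t => w₀ + t * ψ t, fun t ht => ?_, by simp, hw ▸ hψ0, fun t ht => ?_⟩
  · have := (hball t ht).1
    fun_prop
  · rw [hfG, (hball t ht).2, mul_zero]
end

section
/- For every z ∈ ℂ, there exist w₁, w₂ ∈ ℂ with w₁ ≠ w₂, w₁³ − 3w₁ + 2z = 0, w₂³ − 3w₂ + 2z = 0, and Re(w₁) = Re(w₂), if and only if z is real with |Re(z)| > 1 (i.e., Im(z) = 0 and 1 < |Re(z)|). (Thus for the algebraic function defined by w³ − 3w + 2z = 0, the set of points over which two distinct branches have equal real parts consists of the two real rays beyond ±1.) -/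
lemma aux9 (x : ℝ) (hx : 1 < x) :
    ∃ w₁ w₂ : ℂ, w₁ ≠ w₂ ∧ w₁ ^ 3 - 3 * w₁ + 2 * (x:ℂ) = 0 ∧
      w₂ ^ 3 - 3 * w₂ + 2 * (x:ℂ) = 0 ∧ w₁.re = w₂.re := by
  obtain ⟨a, ha, hfa⟩ : ∃ a ∈ Set.Icc (1:ℝ) x, 4*a^3 - 3*a = x := by
    have hc : ContinuousOn (fun a : ℝ => 4*a^3 - 3*a) (Set.Icc 1 x) := by fun_prop
    have h2 := intermediate_value_Icc (le_of_lt hx) hc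
    have hmem : x ∈ Set.Icc ((4:ℝ)*1^3 - 3*1) (4*x^3 - 3*x) := by
      constructor
      · norm_num; linarith
      · nlinarith [mul_pos (show (0:ℝ) < x by linarith) (show (0:ℝ) < x^2 - 1 by nlinarith)]
    obtain ⟨a, ha, hfa⟩ := h2 hmem
    exact ⟨a, ha, hfa⟩
  have ha1 : 1 < a := lt_of_le_of_ne ha.1 (by rintro rfl; nlinarith)
  set b := Real.sqrt (3*a^2 - 3) with hbdef
  have hb2 : b^2 = 3*a^2 - 3 := Real.sq_sqrt (by nlinarith)
  have hbpos : 0 < b := Real.sqrt_pos.mpr (by nlinarith)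
  refine ⟨⟨a, b⟩, ⟨a, -b⟩, ?_, ?_, ?_, rfl⟩
  · intro h
    rw [Complex.ext_iff] at h
    simp at h
    linarith
  · rw [Complex.ext_iff]
    simp [pow_succ, Complex.mul_re, Complex.mul_im]
    constructor
    · linear_combination (-3*a)*hb2 - 2*hfa
    · linear_combination (-b)*hb2
  · rw [Complex.ext_iff]
    simp [pow_succ, Complex.mul_re, Complex.mul_im]
    constructor
    · linear_combination (-3*a)*hb2 - 2*hfa
    · linear_combination (b)*hb2


/-- For `z ∈ ℂ`, the cubic `w³ − 3w + 2z` has two distinct roots with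
equal real parts iff `z` is real with `|Re z| > 1`. -/
theorem statement9 (z : ℂ) :
    (∃ w₁ w₂ : ℂ, w₁ ≠ w₂ ∧ w₁ ^ 3 - 3 * w₁ + 2 * z = 0 ∧ w₂ ^ 3 - 3 * w₂ + 2 * z = 0 ∧
      w₁.re = w₂.re) ↔ (z.im = 0 ∧ 1 < |z.re|) := by
  constructor
  · rintro ⟨w₁, w₂, hne, h1, h2, hre⟩
    rw [Complex.ext_iff] at h1 h2
    simp [pow_succ, Complex.mul_re, Complex.mul_im] at h1 h2
    obtain ⟨e1, e2⟩ := h1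
    obtain ⟨e3, e4⟩ := h2
    rw [← hre] at e3 e4
    set a := w₁.re
    set b := w₁.im
    set c := w₂.im
    have hbc : b ≠ c := by
      intro h; exact hne (Complex.ext hre h)
    have key1 : a * (b + c) = 0 := by
      have h5 : (b - c) * (a * (b + c)) = 0 := by linear_combination (-(1:ℝ)/3)*e1 + (1/3)*e3
      rcases mul_eq_zero.mp h5 with h | h
      · exact absurd (by linarith : b = c) hbc
      · exact h
    have key2 : 3*a^2 - b^2 - b*c - c^2 = 3 := by
      have h5 : (b - c) * (3*a^2 - b^2 - b*c - c^2 - 3) = 0 := by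
        linear_combination e2 - e4
      rcases mul_eq_zero.mp h5 with h | h
      · exact absurd (by linarith : b = c) hbc
      · linarith
    rcases mul_eq_zero.mp key1 with ha0 | hbc0
    · exfalso
      nlinarith [sq_nonneg (b + c), sq_nonneg b, sq_nonneg c]
    · have hcb : c = -b := by linarith
      have hb0 : b ≠ 0 := by
        intro h; apply hbc; rw [h, hcb, h]; ring
      have hb2 : b^2 = 3*a^2 - 3 := by rw [hcb] at key2; nlinarith [key2]
      have ha2 : 1 < a^2 := by
        have : 0 < b^2 := by positivity
        nlinarith
      have hy : z.im = 0 := by linear_combination e2/2 + (b/2)*hb2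
      have hx : z.re = 4*a^3 - 3*a := by
        linear_combination e1/2 + (3*a/2)*hb2
      constructor
      · exact hy
      · have h4 : (0:ℝ) < (4*a^2-1)^2 := by nlinarith
        have hx2 : 1 < z.re^2 := by
          rw [hx]; nlinarith [mul_pos (sub_pos.mpr ha2) h4]
        nlinarith [sq_abs z.re, abs_nonneg z.re]
  · rintro ⟨hy, hx⟩
    rcases lt_abs.mp hx with h | h
    · have hz : z = ((z.re : ℝ) : ℂ) := by
        apply Complex.ext <;> simp [hy]
      rw [hz]
      exact aux9 z.re h
    · obtain ⟨w₁, w₂, hne, h1, h2, hre⟩ := aux9 (-z.re) h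
      have hz : ((-z.re : ℝ) : ℂ) = -z := by
        apply Complex.ext <;> simp [hy]
      refine ⟨-w₁, -w₂, fun hh => hne (neg_inj.mp hh), ?_, ?_, by simp [hre]⟩
      · linear_combination -h1 + 2*hz
      · linear_combination -h2 + 2*hz
end

section
/- Let ε ∈ ℝ. For every z ∈ ℂ, there exist w₁, w₂ ∈ ℂ with w₁ ≠ w₂, w₁² − z·w₁ + ε = 0, w₂² − z·w₂ + ε = 0, and Re(w₁) = Re(w₂), if and only if z² is real with Re(z²) < 4ε (i.e., Im(z²) = 0 and Re(z²) < 4ε). (This computes the set B_ε⁺ for the deformed reducible curve f(z,w) = w(w − z) + ε.) -/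
/-!
Two distinct roots of `w² − zw + ε` are `(z ± δ)/2` with `δ ≠ 0` a square root of the discriminant
`z² − 4ε`, and their real parts agree exactly when `δ` is purely imaginary, i.e. when `z² − 4ε` is a
negative real number.
-/

theorem sq_sub_eq_discrim_of_roots {R : Type*} [CommRing R] [NoZeroDivisors R] {s p w₁ w₂ : R}
    (hne : w₁ ≠ w₂) (h₁ : w₁ ^ 2 - s * w₁ + p = 0) (h₂ : w₂ ^ 2 - s * w₂ + p = 0) :
    (w₁ - w₂) ^ 2 = s ^ 2 - 4 * p := by
  have hsum : w₁ + w₂ = s := by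
    have hfactor : (w₁ - w₂) * (w₁ + w₂ - s) = 0 := by linear_combination h₁ - h₂
    exact sub_eq_zero.mp ((mul_eq_zero.mp hfactor).resolve_left (sub_ne_zero.mpr hne))
  linear_combination (w₂ + s - 3 * w₁) * hsum + 4 * h₁

theorem exists_distinct_roots_iff_exists_sq_eq_discrim {K : Type*} [Field K] [NeZero (2 : K)] (s p : K) (P : K → Prop) :
    (∃ w₁ w₂ : K, w₁ ≠ w₂ ∧ w₁ ^ 2 - s * w₁ + p = 0 ∧ w₂ ^ 2 - s * w₂ + p = 0 ∧ P (w₁ - w₂)) ↔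
      ∃ δ : K, δ ≠ 0 ∧ δ ^ 2 = s ^ 2 - 4 * p ∧ P δ := by
  constructor
  · rintro ⟨w₁, w₂, hne, h₁, h₂, hP⟩
    exact ⟨w₁ - w₂, sub_ne_zero.mpr hne, sq_sub_eq_discrim_of_roots hne h₁ h₂, hP⟩
  · rintro ⟨δ, hδ, hsq, hP⟩
    have h2 : (2 : K) ≠ 0 := two_ne_zero
    refine ⟨(s + δ) / 2, (s - δ) / 2, ?_, ?_, ?_, ?_⟩
    · rw [Ne, div_left_inj' h2]
      intro h
      have h2δ : 2 * δ = 0 := by linear_combination h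
      exact hδ ((mul_eq_zero.mp h2δ).resolve_left h2)
    · field_simp
      linear_combination hsq
    · field_simp
      linear_combination hsq
    · convert hP using 1
      field_simp
      ring

theorem Complex.exists_ne_zero_sq_eq_re_eq_zero_iff (c : ℂ) :
    (∃ δ : ℂ, δ ≠ 0 ∧ δ ^ 2 = c ∧ δ.re = 0) ↔ c.im = 0 ∧ c.re < 0 := by
  constructor
  · rintro ⟨δ, hδ, rfl, hre⟩
    have him : δ.im ≠ 0 := fun him => hδ (Complex.ext hre him)
    refine ⟨by simp [sq, hre], ?_⟩
    simpa [sq, hre] using mul_self_pos.mpr him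
  · rintro ⟨him, hre⟩
    have hsqrt : 0 < √(-c.re) := Real.sqrt_pos.mpr (neg_pos.mpr hre)
    refine ⟨√(-c.re) * I, by simp [hsqrt.ne'], ?_, by simp⟩
    apply Complex.ext <;> simp [sq, him, Real.mul_self_sqrt (neg_nonneg.mpr hre.le)]

/-- For real `ε` and `z ∈ ℂ`, the quadratic `w² − zw + ε` has two
distinct roots with equal real parts iff `z²` is real with `Re(z²) < 4ε`. -/
theorem statement10 (ε : ℝ) (z : ℂ) :
    (∃ w₁ w₂ : ℂ, w₁ ≠ w₂ ∧ w₁ ^ 2 - z * w₁ + (ε : ℂ) = 0 ∧ w₂ ^ 2 - z * w₂ + (ε : ℂ) = 0 ∧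
      w₁.re = w₂.re) ↔ ((z ^ 2).im = 0 ∧ (z ^ 2).re < 4 * ε) := by
  have hre : ∀ w₁ w₂ : ℂ, w₁.re = w₂.re ↔ (w₁ - w₂).re = 0 := fun w₁ w₂ => by
    rw [Complex.sub_re, sub_eq_zero]
  simp_rw [hre, exists_distinct_roots_iff_exists_sq_eq_discrim z ε fun δ => δ.re = 0,
    Complex.exists_ne_zero_sq_eq_re_eq_zero_iff]
  simp [sub_neg]
end

section
/- For every z ∈ ℂ, there exist w₁, w₂ ∈ ℂ with w₁ ≠ w₂, w₁³ − 3w₁ + 2·exp(z) = 0, w₂³ − 3w₂ + 2·exp(z) = 0, and Re(w₁) = Re(w₂), if and only if Re(z) > 0 and Im(z) = k·π for some integer k. (Thus for the analytic curve w³ − 3w + 2e^z = 0 the set B⁺ of points over which two distinct branches have equal real parts is a union of horizontal rays.) -/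
/-
If `w₁ ≠ w₂` are roots of `w³ − 3w + 2c` with the same real part `a`, subtracting
the two equations gives `w₁² + w₁w₂ + w₂² = 3`; its imaginary part forces `w₂ = conj w₁` and
its real part then gives `(Im w₁)² = 3(a² − 1)`, so `a² > 1`. For `w = a + bi` with
`b² = 3(a² − 1)` one computes `w³ − 3w = −2T₃(a)`, where `T₃(a) = 4a³ − 3a` is the Chebyshev
polynomial; hence `c = T₃(a)` is real with `|c| > 1`, and conversely every real `c` with
`|c| > 1` is `T₃(±cosh t)`. For `c = eᶻ` these conditions read `Im z ∈ πℤ` and `Re z > 0`.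
-/

open Complex

lemma Complex.exp_im_eq_zero_iff (z : ℂ) : (exp z).im = 0 ↔ ∃ k : ℤ, z.im = k * Real.pi := by
  rw [exp_im, mul_eq_zero, or_iff_right (Real.exp_pos _).ne', Real.sin_eq_zero_iff]
  simp only [eq_comm]

lemma one_lt_abs_four_mul_pow_three_sub_three_mul {a : ℝ} (ha : 1 < a ^ 2) :
    1 < |4 * a ^ 3 - 3 * a| := by
  rw [← one_lt_sq_iff_one_lt_abs]
  have hfactor : (4 * a ^ 3 - 3 * a) ^ 2 - 1 = (a ^ 2 - 1) * (4 * a ^ 2 - 1) ^ 2 := by ring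
  nlinarith [mul_pos (sub_pos.2 ha) (pow_pos (show (0 : ℝ) < 4 * a ^ 2 - 1 by linarith) 2)]

lemma exists_one_lt_sq_four_mul_pow_three_sub_three_mul_eq {s : ℝ} (hs : 1 < |s|) :
    ∃ a : ℝ, 1 < a ^ 2 ∧ 4 * a ^ 3 - 3 * a = s := by
  have hpos : ∀ t : ℝ, 1 < t → ∃ a : ℝ, 1 < a ∧ 4 * a ^ 3 - 3 * a = t := fun t ht =>
    ⟨Real.cosh (Real.arcosh t / 3),
      Real.one_lt_cosh.2 (div_pos (Real.arcosh_pos ht) three_pos).ne',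
      by rw [← Real.cosh_three_mul, mul_div_cancel₀ _ three_ne_zero, Real.cosh_arcosh ht.le]⟩
  rcases lt_abs.1 hs with h | h
  · obtain ⟨a, ha, has⟩ := hpos s h
    exact ⟨a, by nlinarith, has⟩
  · obtain ⟨a, ha, has⟩ := hpos (-s) h
    exact ⟨-a, by nlinarith, by linarith⟩

lemma add_mul_I_cubic_eq_zero {a b : ℝ} (hb : b ^ 2 = 3 * (a ^ 2 - 1)) :
    ((a : ℂ) + b * I) ^ 3 - 3 * ((a : ℂ) + b * I) + 2 * ((4 * a ^ 3 - 3 * a : ℝ) : ℂ) = 0 := by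
  have hb' : (b : ℂ) ^ 2 = 3 * ((a : ℂ) ^ 2 - 1) := by exact_mod_cast hb
  push_cast
  linear_combination (-3 * (a : ℂ) - b * I) * hb' + (3 * a * b ^ 2 + b ^ 3 * I) * I_sq

lemma im_sq_of_cubic_roots_re_eq {c w₁ w₂ : ℂ} (hne : w₁ ≠ w₂)
    (h₁ : w₁ ^ 3 - 3 * w₁ + 2 * c = 0) (h₂ : w₂ ^ 3 - 3 * w₂ + 2 * c = 0)
    (hre : w₁.re = w₂.re) :
    1 < w₁.re ^ 2 ∧ w₁.im ^ 2 = 3 * (w₁.re ^ 2 - 1) := by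
  have hsum : w₁ ^ 2 + w₁ * w₂ + w₂ ^ 2 = 3 := by
    have : (w₁ - w₂) * (w₁ ^ 2 + w₁ * w₂ + w₂ ^ 2 - 3) = 0 := by linear_combination h₁ - h₂
    linear_combination (mul_eq_zero.1 this).resolve_left (sub_ne_zero.2 hne)
  have him_ne : w₁.im ≠ w₂.im := fun h => hne (Complex.ext hre h)
  have hsum_re := congrArg re hsum
  have hsum_im := congrArg im hsum
  simp only [pow_two, add_re, add_im, mul_re, mul_im, re_ofNat, im_ofNat, ← hre] at hsum_re hsum_im
  have hconj : w₂.im = -w₁.im := by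
    rcases mul_eq_zero.1 (show 3 * w₁.re * (w₁.im + w₂.im) = 0 by linarith) with h | h
    · have hre0 : w₁.re = 0 := by linarith
      rw [hre0] at hsum_re
      nlinarith [sq_nonneg (w₁.im + w₂.im), sq_nonneg w₁.im, sq_nonneg w₂.im]
    · linarith
  have him_ne_zero : w₁.im ≠ 0 := fun h => him_ne (by rw [hconj, h, neg_zero])
  have him_sq : w₁.im ^ 2 = 3 * (w₁.re ^ 2 - 1) := by rw [hconj] at hsum_re; linarith
  have him_sq_pos : 0 < w₁.im ^ 2 := by positivity
  exact ⟨by linarith, him_sq⟩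

theorem cubic_exists_ne_roots_re_eq_iff (c : ℂ) :
    (∃ w₁ w₂ : ℂ, w₁ ≠ w₂ ∧ w₁ ^ 3 - 3 * w₁ + 2 * c = 0 ∧ w₂ ^ 3 - 3 * w₂ + 2 * c = 0 ∧
        w₁.re = w₂.re) ↔
      c.im = 0 ∧ 1 < ‖c‖ := by
  constructor
  · rintro ⟨w₁, w₂, hne, h₁, h₂, hre⟩
    obtain ⟨ha, hb⟩ := im_sq_of_cubic_roots_re_eq hne h₁ h₂ hre
    have hc : c = ((4 * w₁.re ^ 3 - 3 * w₁.re : ℝ) : ℂ) := by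
      have h := add_mul_I_cubic_eq_zero hb
      rw [re_add_im] at h
      linear_combination (h₁ - h) / 2
    rw [hc, ofReal_im, norm_real, Real.norm_eq_abs]
    exact ⟨rfl, one_lt_abs_four_mul_pow_three_sub_three_mul ha⟩
  · rintro ⟨him, hnorm⟩
    have hc : c = (c.re : ℂ) := Complex.ext rfl (by simpa using him)
    rw [hc, norm_real, Real.norm_eq_abs] at hnorm
    obtain ⟨a, ha, hac⟩ := exists_one_lt_sq_four_mul_pow_three_sub_three_mul_eq hnorm
    set b := √(3 * (a ^ 2 - 1))
    have hb : b ^ 2 = 3 * (a ^ 2 - 1) := Real.sq_sqrt (by linarith)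
    have hb_pos : 0 < b := Real.sqrt_pos.2 (by linarith)
    refine ⟨a + b * I, a + (-b : ℝ) * I, fun h => ?_, ?_, ?_, by simp⟩
    · have hb_eq := congrArg im h
      simp only [add_im, ofReal_im, mul_im, ofReal_re, I_im, mul_one, I_re, mul_zero, add_zero,
        zero_add] at hb_eq
      linarith
    · rw [hc, ← hac]; exact add_mul_I_cubic_eq_zero hb
    · rw [hc, ← hac]; exact add_mul_I_cubic_eq_zero (by rwa [neg_sq])

/-- The cubic `w³ − 3w + 2eᶻ` has two distinct roots with equal real
parts iff `Re z > 0` and `Im z = kπ` for some integer `k`: the set `B⁺` of the analytic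
curve `w³ − 3w + 2eᶻ = 0` is a union of horizontal rays. -/
theorem statement14 (z : ℂ) :
    (∃ w₁ w₂ : ℂ, w₁ ≠ w₂ ∧
        w₁ ^ 3 - 3 * w₁ + 2 * Complex.exp z = 0 ∧
        w₂ ^ 3 - 3 * w₂ + 2 * Complex.exp z = 0 ∧ w₁.re = w₂.re) ↔
      (0 < z.re ∧ ∃ k : ℤ, z.im = (k : ℝ) * Real.pi) := by
  rw [cubic_exists_ne_roots_re_eq_iff, Complex.exp_im_eq_zero_iff, norm_exp, Real.one_lt_exp_iff,
    and_comm]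
end

section
/- Let d ≥ 1 and let n₁, …, n_d be positive integers. For M > 0 define the polynomial p_M(z) = M·(z−1)^{n₁}·(z−2)^{n₂}⋯(z−d)^{n_d}. Then for all sufficiently large M, the compact set P_M = {z ∈ ℂ : |p_M(z)| ≤ 1} has exactly d connected components, and each connected component contains exactly one of the points 1, 2, …, d. -/
/-!
Off the discs `B_j = ball j (1/2)` we have `|p_M| ≥ M 2^{-N}` with `N = ∑ n_j`, so for
`M ≥ 2^{N+1}` the set `P_M` lies in the disjoint union of the `B_j`, and it suffices to show
that each `P_M ∩ B_j` is connected. By the maximum modulus principle applied to `1/p_M`, every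
component of the open set `{|p_M| < 1}` contains a zero of `p_M`; hence `{|p_M| < 1} ∩ B_j` is
the single component through `j`. By the open mapping theorem `P_M` is contained in the closure
of `{|p_M| < 1}`, so `P_M ∩ B_j` is squeezed between a connected set and its closure.
-/

open Function Metric Set

section Topology

variable {X ι : Type*} [TopologicalSpace X]

lemma IsPreconnected.subset_of_subset_iUnion {B : ι → Set X} {T : Set X} (hT : IsPreconnected T)
    (hB : ∀ j, IsOpen (B j)) (hdisj : Pairwise (Disjoint on B)) (hTB : T ⊆ ⋃ j, B j) {j : ι}
    (hj : (T ∩ B j).Nonempty) : T ⊆ B j := by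
  refine hT.subset_left_of_subset_union (hB j) (isOpen_biUnion fun k _ => hB k)
    (disjoint_iUnion₂_right.mpr fun k hk => hdisj (Ne.symm hk)) (fun w hw => ?_) hj
  obtain ⟨k, hk⟩ := mem_iUnion.mp (hTB hw)
  by_cases hkj : k = j
  · exact Or.inl (hkj ▸ hk)
  · exact Or.inr (mem_biUnion hkj hk)

lemma connectedComponentIn_eq_inter_of_subset_iUnion {B : ι → Set X} {S : Set X}
    (hB : ∀ j, IsOpen (B j)) (hdisj : Pairwise (Disjoint on B)) (hSB : S ⊆ ⋃ j, B j) {j : ι}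
    (hconn : IsPreconnected (S ∩ B j)) {z : X} (hz : z ∈ S ∩ B j) :
    connectedComponentIn S z = S ∩ B j :=
  subset_antisymm
    (subset_inter (connectedComponentIn_subset S z)
      (isPreconnected_connectedComponentIn.subset_of_subset_iUnion hB hdisj
        ((connectedComponentIn_subset S z).trans hSB) ⟨z, mem_connectedComponentIn hz.1, hz.2⟩))
    (hconn.subset_connectedComponentIn hz inter_subset_left)

lemma IsOpen.disjoint_frontier_connectedComponentIn [LocallyConnectedSpace X] {U : Set X}
    (hU : IsOpen U) (x : X) : Disjoint (frontier (connectedComponentIn U x)) U := by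
  refine disjoint_left.mpr fun y hy hyU => ?_
  rw [hU.connectedComponentIn.frontier_eq] at hy
  obtain ⟨v, hvy, hvx⟩ := _root_.mem_closure_iff.mp hy.1 _ hU.connectedComponentIn
    (mem_connectedComponentIn hyU)
  rw [connectedComponentIn_eq hvx, ← connectedComponentIn_eq hvy] at hy
  exact hy.2 (mem_connectedComponentIn hyU)

end Topology

section Analysis

variable {f : ℂ → ℂ} {r : ℝ}

lemma Differentiable.setOf_norm_le_subset_closure (hf : Differentiable ℂ f) {z₀ : ℂ}
    (h₀ : f z₀ = 0) (hr : 0 < r) : {z | ‖f z‖ ≤ r} ⊆ closure {z | ‖f z‖ < r} := by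
  rcases (hf.differentiableOn.analyticOnNhd isOpen_univ).is_constant_or_isOpenMap with
    ⟨w, hw⟩ | hopen
  · intro z _
    refine subset_closure ?_
    simp [hw z, ← hw z₀, h₀, hr]
  · have := hopen.preimage_closure_subset_closure_preimage (s := ball (0 : ℂ) r)
    simpa only [closure_ball _ hr.ne', preimage, mem_closedBall_zero_iff, mem_ball_zero_iff]
      using this

lemma Differentiable.exists_zero_mem_connectedComponentIn (hf : Differentiable ℂ f) {x : ℂ}
    (hx : ‖f x‖ < r) (hV : Bornology.IsBounded (connectedComponentIn {z | ‖f z‖ < r} x)) :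
    ∃ w ∈ connectedComponentIn {z | ‖f z‖ < r} x, f w = 0 := by
  set U := {z | ‖f z‖ < r}
  set V := connectedComponentIn U x
  by_contra! hV0
  have hU : IsOpen U := isOpen_lt hf.continuous.norm continuous_const
  have hfr : ∀ y ∈ frontier V, r ≤ ‖f y‖ := fun y hy =>
    not_lt.mp fun hyU => disjoint_left.mp (hU.disjoint_frontier_connectedComponentIn x) hy hyU
  have hr : 0 < r := (norm_nonneg _).trans_lt hx
  have hne : ∀ y ∈ closure V, f y ≠ 0 := by
    intro y hy
    rcases (closure_eq_self_union_frontier V ▸ hy) with hyV | hyF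
    · exact hV0 y hyV
    · exact norm_pos_iff.mp (hr.trans_le (hfr y hyF))
  have hdiff : DiffContOnCl ℂ (fun w => (f w)⁻¹) V :=
    ⟨fun w hw => ((hf w).inv (hne w (subset_closure hw))).differentiableWithinAt,
      hf.continuous.continuousOn.inv₀ hne⟩
  have hle := Complex.norm_le_of_forall_mem_frontier_norm_le hV hdiff
    (C := r⁻¹) (fun y hy => by rw [norm_inv]; exact inv_anti₀ hr (hfr y hy))
    (subset_closure (mem_connectedComponentIn hx))
  rw [norm_inv, inv_le_inv₀ (norm_pos_iff.mpr (hV0 x (mem_connectedComponentIn hx))) hr] at hle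
  exact hx.not_ge hle

end Analysis

section LevelSet

variable {ι : Type*} {p : ℂ → ℂ} {c : ι → ℂ} {δ : ℝ}

lemma eq_of_mem_ball_of_pairwise_disjoint (hδ : 0 < δ)
    (hdisj : Pairwise (Disjoint on fun j => ball (c j) δ)) {j k : ι} (h : c k ∈ ball (c j) δ) :
    k = j :=
  by_contra fun hkj => disjoint_left.mp (hdisj hkj) (mem_ball_self hδ) h

lemma connectedComponentIn_setOf_norm_lt_one_eq (hp : Differentiable ℂ p)
    (hzero : ∀ w, p w = 0 ↔ ∃ j, c j = w) (hδ : 0 < δ)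
    (hdisj : Pairwise (Disjoint on fun j => ball (c j) δ))
    (hcover : {z | ‖p z‖ ≤ 1} ⊆ ⋃ j, ball (c j) δ) (j : ι) :
    connectedComponentIn {z | ‖p z‖ < 1} (c j) = {z | ‖p z‖ < 1} ∩ ball (c j) δ := by
  set U := {z | ‖p z‖ < 1}
  have hUS : U ⊆ {z | ‖p z‖ ≤ 1} := ofPred_subset_ofPred.mpr fun _ => le_of_lt
  have hcomp : ∀ x ∈ U ∩ ball (c j) δ, connectedComponentIn U x ⊆ ball (c j) δ :=
    fun x hx => isPreconnected_connectedComponentIn.subset_of_subset_iUnion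
      (fun _ => isOpen_ball) hdisj
      ((connectedComponentIn_subset U x).trans (hUS.trans hcover))
      ⟨x, mem_connectedComponentIn hx.1, hx.2⟩
  have hcj : c j ∈ U ∩ ball (c j) δ := ⟨by simp [U, (hzero _).mpr ⟨j, rfl⟩], mem_ball_self hδ⟩
  refine subset_antisymm (subset_inter (connectedComponentIn_subset U _) (hcomp _ hcj)) ?_
  intro x hx
  obtain ⟨w, hwV, hw0⟩ := hp.exists_zero_mem_connectedComponentIn hx.1
    (isBounded_ball.subset (hcomp x hx))
  obtain ⟨k, rfl⟩ := (hzero w).mp hw0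
  obtain rfl := eq_of_mem_ball_of_pairwise_disjoint hδ hdisj (hcomp x hx hwV)
  rw [← connectedComponentIn_eq hwV]
  exact mem_connectedComponentIn hx.1

lemma isPreconnected_setOf_norm_le_one_inter_ball (hp : Differentiable ℂ p)
    (hzero : ∀ w, p w = 0 ↔ ∃ j, c j = w) (hδ : 0 < δ)
    (hdisj : Pairwise (Disjoint on fun j => ball (c j) δ))
    (hcover : {z | ‖p z‖ ≤ 1} ⊆ ⋃ j, ball (c j) δ) (j : ι) :
    IsPreconnected ({z | ‖p z‖ ≤ 1} ∩ ball (c j) δ) := by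
  have hU := connectedComponentIn_setOf_norm_lt_one_eq hp hzero hδ hdisj hcover j
  refine (hU ▸ isPreconnected_connectedComponentIn).subset_closure
    (inter_subset_inter_left _ (ofPred_subset_ofPred.mpr fun _ => le_of_lt)) ?_
  calc {z | ‖p z‖ ≤ 1} ∩ ball (c j) δ
      ⊆ ball (c j) δ ∩ closure {z | ‖p z‖ < 1} := by
        rw [inter_comm]
        exact inter_subset_inter_right _
          (hp.setOf_norm_le_subset_closure ((hzero _).mpr ⟨j, rfl⟩) one_pos)
    _ ⊆ closure (ball (c j) δ ∩ {z | ‖p z‖ < 1}) := isOpen_ball.inter_closure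
    _ = closure ({z | ‖p z‖ < 1} ∩ ball (c j) δ) := by rw [inter_comm]

theorem connectedComponentIn_setOf_norm_le_one (hp : Differentiable ℂ p)
    (hzero : ∀ w, p w = 0 ↔ ∃ j, c j = w) (hδ : 0 < δ)
    (hdisj : Pairwise (Disjoint on fun j => ball (c j) δ))
    (hcover : {z | ‖p z‖ ≤ 1} ⊆ ⋃ j, ball (c j) δ) :
    {C : Set ℂ | ∃ z ∈ {z | ‖p z‖ ≤ 1}, C = connectedComponentIn {z | ‖p z‖ ≤ 1} z}.ncard =
        Nat.card ι ∧
      ∀ z ∈ {z | ‖p z‖ ≤ 1}, ∃! j, c j ∈ connectedComponentIn {z | ‖p z‖ ≤ 1} z := by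
  set S := {z | ‖p z‖ ≤ 1}
  have hcomp : ∀ j, ∀ z ∈ S ∩ ball (c j) δ, connectedComponentIn S z = S ∩ ball (c j) δ :=
    fun j _ hz => connectedComponentIn_eq_inter_of_subset_iUnion (fun _ => isOpen_ball) hdisj
      hcover (isPreconnected_setOf_norm_le_one_inter_ball hp hzero hδ hdisj hcover j) hz
  have hcS : ∀ j, c j ∈ S ∩ ball (c j) δ :=
    fun j => ⟨by simp [S, (hzero _).mpr ⟨j, rfl⟩], mem_ball_self hδ⟩
  have huniq : ∀ j k, c k ∈ S ∩ ball (c j) δ → k = j :=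
    fun _ _ hk => eq_of_mem_ball_of_pairwise_disjoint hδ hdisj hk.2
  constructor
  · have hrange : {C | ∃ z ∈ S, C = connectedComponentIn S z} =
        range fun j => S ∩ ball (c j) δ := by
      ext C
      constructor
      · rintro ⟨z, hz, rfl⟩
        obtain ⟨j, hj⟩ := mem_iUnion.mp (hcover hz)
        exact ⟨j, (hcomp j z ⟨hz, hj⟩).symm⟩
      · rintro ⟨j, rfl⟩
        exact ⟨c j, (hcS j).1, (hcomp j _ (hcS j)).symm⟩
    rw [hrange, ncard_range_of_injective]
    exact fun j k hjk => huniq k j (hjk ▸ hcS j)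
  · intro z hz
    obtain ⟨j, hj⟩ := mem_iUnion.mp (hcover hz)
    rw [hcomp j z ⟨hz, hj⟩]
    exact ⟨j, hcS j, huniq j⟩

end LevelSet

section Polynomial

variable {ι : Type*} [Fintype ι] {c : ι → ℂ} {n : ι → ℕ}

lemma mul_prod_sub_pow_eq_zero_iff {M : ℂ} (hM : M ≠ 0) (hn : ∀ j, n j ≠ 0) {w : ℂ} :
    M * ∏ j, (w - c j) ^ n j = 0 ↔ ∃ j, c j = w := by
  rw [mul_eq_zero, or_iff_right hM, Finset.prod_eq_zero_iff]
  simp [pow_eq_zero_iff (hn _), sub_eq_zero, eq_comm]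

lemma setOf_norm_mul_prod_sub_pow_le_one_subset {M δ : ℝ} (hδ : 0 ≤ δ)
    (hM : 1 < M * δ ^ ∑ j, n j) :
    {z : ℂ | ‖(M : ℂ) * ∏ j, (z - c j) ^ n j‖ ≤ 1} ⊆ ⋃ j, ball (c j) δ := by
  intro z hz
  by_contra! hfar
  simp only [mem_iUnion, mem_ball, not_exists, not_lt, dist_eq_norm] at hfar
  have hM0 : 0 < M := pos_of_mul_pos_left (one_pos.trans hM) (by positivity)
  have hprod : δ ^ ∑ j, n j ≤ ∏ j, ‖z - c j‖ ^ n j := by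
    rw [← Finset.prod_pow_eq_pow_sum]
    exact Finset.prod_le_prod (fun _ _ => by positivity)
      fun j _ => pow_le_pow_left₀ hδ (hfar j) _
  have hnorm : ‖(M : ℂ) * ∏ j, (z - c j) ^ n j‖ = M * ∏ j, ‖z - c j‖ ^ n j := by
    simp [norm_prod, abs_of_pos hM0]
  rw [mem_ofPred_eq, hnorm] at hz
  linarith [mul_le_mul_of_nonneg_left hprod hM0.le]

end Polynomial

lemma pairwise_disjoint_ball_natCast_add_one (d : ℕ) :
    Pairwise (Disjoint on fun j : Fin d => ball ((j : ℕ) + 1 : ℂ) (1 / 2)) := by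
  intro j k hjk
  refine ball_disjoint_ball ?_
  have h : 1 ≤ dist ((j : ℕ) : ℝ) (k : ℕ) :=
    Nat.pairwise_one_le_dist (Fin.val_injective.ne hjk)
  have hdist : dist ((j : ℕ) + 1 : ℂ) ((k : ℕ) + 1) = dist ((j : ℕ) : ℝ) (k : ℕ) := by
    rw [dist_add_right, Complex.dist_eq, Real.dist_eq, ← Real.norm_eq_abs, ← Complex.norm_real]
    push_cast
    rfl
  linarith

theorem statement15_general (d : ℕ) (nn : Fin d → ℕ) (hnn : ∀ j, 1 ≤ nn j) :
    ∃ M₀ : ℝ, 0 < M₀ ∧ ∀ M : ℝ, M₀ ≤ M →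
      {C : Set ℂ | ∃ z ∈ {z : ℂ | ‖((M : ℂ) *
          ∏ j : Fin d, (z - ((j : ℕ) + 1 : ℂ)) ^ nn j)‖ ≤ 1},
        C = connectedComponentIn
          {z : ℂ | ‖((M : ℂ) *
            ∏ j : Fin d, (z - ((j : ℕ) + 1 : ℂ)) ^ nn j)‖ ≤ 1} z}.ncard = d ∧
      ∀ z ∈ {z : ℂ | ‖((M : ℂ) *
          ∏ j : Fin d, (z - ((j : ℕ) + 1 : ℂ)) ^ nn j)‖ ≤ 1},
        ∃! j : Fin d, ((j : ℕ) + 1 : ℂ) ∈ connectedComponentIn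
          {z : ℂ | ‖((M : ℂ) *
            ∏ j : Fin d, (z - ((j : ℕ) + 1 : ℂ)) ^ nn j)‖ ≤ 1} z := by
  refine ⟨2 ^ (∑ j, nn j + 1), by positivity, fun M hM => ?_⟩
  have hM0 : (M : ℂ) ≠ 0 :=
    Complex.ofReal_ne_zero.mpr ((pow_pos two_pos _).trans_le hM).ne'
  have hMδ : 1 < M * (1 / 2) ^ ∑ j, nn j := by
    calc (1 : ℝ) < 2 ^ (∑ j, nn j + 1) * (1 / 2) ^ ∑ j, nn j := by
          rw [pow_succ, mul_right_comm, ← mul_pow]; norm_num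
      _ ≤ M * (1 / 2) ^ ∑ j, nn j := by gcongr
  have h := connectedComponentIn_setOf_norm_le_one (δ := 1 / 2)
    (p := fun z => (M : ℂ) * ∏ j : Fin d, (z - ((j : ℕ) + 1 : ℂ)) ^ nn j) (by fun_prop)
    (fun _ => mul_prod_sub_pow_eq_zero_iff hM0 fun j => Nat.one_le_iff_ne_zero.mp (hnn j))
    one_half_pos
    (pairwise_disjoint_ball_natCast_add_one d)
    (setOf_norm_mul_prod_sub_pow_le_one_subset one_half_pos.le hMδ)
  rwa [Nat.card_fin] at h

/-- For `p_M(z) = M·(z−1)^{n₁}⋯(z−d)^{n_d}` and all sufficiently large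
`M > 0`, the set `P_M = {z : |p_M(z)| ≤ 1}` has exactly `d` connected components, each of
which contains exactly one of the points `1, …, d`. -/
theorem statement15 (d : ℕ) (hd : 1 ≤ d) (nn : Fin d → ℕ) (hnn : ∀ j, 1 ≤ nn j) :
    ∃ M₀ : ℝ, 0 < M₀ ∧ ∀ M : ℝ, M₀ ≤ M →
      {C : Set ℂ | ∃ z ∈ {z : ℂ | ‖((M : ℂ) *
          ∏ j : Fin d, (z - ((j : ℕ) + 1 : ℂ)) ^ nn j)‖ ≤ 1},
        C = connectedComponentIn
          {z : ℂ | ‖((M : ℂ) *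
            ∏ j : Fin d, (z - ((j : ℕ) + 1 : ℂ)) ^ nn j)‖ ≤ 1} z}.ncard = d ∧
      ∀ z ∈ {z : ℂ | ‖((M : ℂ) *
          ∏ j : Fin d, (z - ((j : ℕ) + 1 : ℂ)) ^ nn j)‖ ≤ 1},
        ∃! j : Fin d, ((j : ℕ) + 1 : ℂ) ∈ connectedComponentIn
          {z : ℂ | ‖((M : ℂ) *
            ∏ j : Fin d, (z - ((j : ℕ) + 1 : ℂ)) ^ nn j)‖ ≤ 1} z :=
  statement15_general d nn hnn
end
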